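/- arXiv:2102.11702 — 3 statements merged into one kernel-verified Lean document; each statement's English description precedes it below -/
import Mathlib

section
/- For every ε > 0 there exists d₀ such that for every integer d ≥ d₀, setting q = ⌊(2/√3)^d⌋ and N = q^d, there is a corner-free set A ⊆ {0,…,N−1} × {0,…,N−1} with #A ≥ 2^{-(c+ε)·√(log₂ N)} · N², where c = 2·√(2·log₂(4/3)). -/
/-!
Write the base-`q` digits of `X, Y ∈ [0, q^d)` as vectors `x, y ∈ [0, q)^d`, and keep the points
whose digit pairs satisfy `x i + y i ∈ [⌊q/2⌋, ⌊q/2⌋ + q)` and whose `‖x - y‖²` equals a fixed `r`.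
Digits in a window of length `q` are unique, so `X + Y` determines the vector `x + y`. For a corner
`(X, Y), (X + δ, Y), (X, Y + δ)` with digit vectors `(x, y), (x', y), (x, y'')` this forces
`x' - x = y'' - y =: e`, so `x - y` and `x - y ± e` have the same norm, whence `e = 0` and `δ = 0`. At least `3q²/4` digit pairs lie in the window,
so pigeonholing over the `d q²` values of `r` gives `(3/4)^d q^{2d} / (d q²)` points. With
`β = log₂ (4/3)` and `q ≈ 2^{dβ/2}` we have `log₂ N ≈ d²β/2`, and the density is about
`2^{-2dβ} = 2^{-c √(log₂ N)}`.
-/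

/-- A set `A ⊆ ℤ²` is corner-free if it contains no corner, i.e. no three points
`(x, y), (x + d, y), (x, y + d)` with `d ≠ 0`. -/
def CornerFreeZ2 (A : Set (ℤ × ℤ)) : Prop :=
  ∀ x y d : ℤ, d ≠ 0 → ¬((x, y) ∈ A ∧ (x + d, y) ∈ A ∧ (x, y + d) ∈ A)

open Finset Filter Real

theorem eq_and_eq_of_add_mul_eq {q a x y m n : ℕ} (hx : x ∈ Ico a (a + q))
    (hy : y ∈ Ico a (a + q)) (heq : x + m * q = y + n * q) : x = y ∧ m = n := by
  rw [mem_Ico] at hx hy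
  rcases lt_trichotomy m n with hmn | hmn | hmn
  · nlinarith
  · subst hmn; omega
  · nlinarith

theorem eq_of_sum_mul_pow_eq {q a : ℕ} : ∀ {d : ℕ} {S T : Fin d → ℕ},
    (∀ i, S i ∈ Ico a (a + q)) → (∀ i, T i ∈ Ico a (a + q)) →
    ∑ i, S i * q ^ (i : ℕ) = ∑ i, T i * q ^ (i : ℕ) → S = T
  | 0, _, _, _, _, _ => Subsingleton.elim _ _
  | d + 1, S, T, hS, hT, hST => by
    simp only [Fin.sum_univ_succ, Fin.val_zero, pow_zero, mul_one, Fin.val_succ, pow_succ,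
      ← mul_assoc, ← Finset.sum_mul] at hST
    obtain ⟨h0, htail⟩ := eq_and_eq_of_add_mul_eq (hS 0) (hT 0) hST
    have := eq_of_sum_mul_pow_eq (fun i => hS i.succ) (fun i => hT i.succ) htail
    exact funext fun i => Fin.cases h0 (congrFun this) i

theorem eq_zero_of_sum_sq_add_eq_of_sum_sq_sub_eq {ι R : Type*} [Fintype ι] [CommRing R]
    [LinearOrder R] [IsStrictOrderedRing R] {u e : ι → R}
    (hadd : ∑ i, (u i + e i) ^ 2 = ∑ i, u i ^ 2) (hsub : ∑ i, (u i - e i) ^ 2 = ∑ i, u i ^ 2) :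
    e = 0 := by
  have hpar :
      ∑ i, (u i + e i) ^ 2 + ∑ i, (u i - e i) ^ 2 = 2 * ∑ i, u i ^ 2 + 2 * ∑ i, e i ^ 2 := by
    simp only [← sum_add_distrib, mul_sum]
    exact sum_congr rfl fun i _ => by ring
  have hzero : ∑ i, e i ^ 2 = 0 := by linarith
  rw [sum_eq_zero_iff_of_nonneg fun i _ => sq_nonneg (e i)] at hzero
  exact funext fun i => pow_eq_zero_iff two_ne_zero |>.mp (hzero i (mem_univ i))

namespace CornerConstruction

variable {q d : ℕ}

def windowPairs (q : ℕ) : Finset (Fin q × Fin q) :=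
  univ.filter fun p => (p.1 + p.2 : ℕ) ∈ Ico (q / 2) (q / 2 + q)

def toPoint (g : Fin d → Fin q × Fin q) : ℤ × ℤ :=
  ((finFunctionFinEquiv fun i => (g i).1 : ℕ), (finFunctionFinEquiv fun i => (g i).2 : ℕ))

def sqDist (g : Fin d → Fin q × Fin q) : ℕ := ∑ i, (((g i).1 : ℤ) - (g i).2).natAbs ^ 2

theorem natCast_sqDist (g : Fin d → Fin q × Fin q) :
    (sqDist g : ℤ) = ∑ i, (((g i).1 : ℤ) - (g i).2) ^ 2 := by
  simp [sqDist]

theorem toPoint_injective : Function.Injective (toPoint : (Fin d → Fin q × Fin q) → ℤ × ℤ) := by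
  intro g g' h
  simp only [toPoint, Prod.mk.injEq, Nat.cast_inj, Fin.val_inj,
    EmbeddingLike.apply_eq_iff_eq, funext_iff] at h
  exact funext fun i => Prod.ext (h.1 i) (h.2 i)

theorem toPoint_mem_box (g : Fin d → Fin q × Fin q) :
    toPoint g ∈ Ico 0 ((q ^ d : ℕ) : ℤ) ×ˢ Ico 0 ((q ^ d : ℕ) : ℤ) := by
  simp only [toPoint, mem_product, mem_Ico, Nat.cast_nonneg, Nat.cast_lt, true_and]
  exact ⟨Fin.is_lt _, Fin.is_lt _⟩

theorem toPoint_fst_add_snd (g : Fin d → Fin q × Fin q) :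
    (toPoint g).1 + (toPoint g).2 = ((∑ i, ((g i).1 + (g i).2 : ℕ) * q ^ (i : ℕ) : ℕ) : ℤ) := by
  simp only [toPoint, finFunctionFinEquiv_apply, add_mul, sum_add_distrib, Nat.cast_add]

theorem digitSum_eq_of_toPoint_add_eq {g g' : Fin d → Fin q × Fin q}
    (hg : ∀ i, g i ∈ windowPairs q) (hg' : ∀ i, g' i ∈ windowPairs q)
    (h : (toPoint g).1 + (toPoint g).2 = (toPoint g').1 + (toPoint g').2) (i : Fin d) :
    ((g i).1 + (g i).2 : ℕ) = (g' i).1 + (g' i).2 := by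
  rw [toPoint_fst_add_snd, toPoint_fst_add_snd, Nat.cast_inj] at h
  refine congrFun (eq_of_sum_mul_pow_eq (a := q / 2) (fun i => ?_) (fun i => ?_) h) i
  · exact (mem_filter.mp (hg i)).2
  · exact (mem_filter.mp (hg' i)).2

theorem fst_eq_of_toPoint_fst_eq {g g' : Fin d → Fin q × Fin q}
    (h : (toPoint g).1 = (toPoint g').1) (i : Fin d) : (g i).1 = (g' i).1 := by
  simp only [toPoint, Nat.cast_inj, Fin.val_inj, EmbeddingLike.apply_eq_iff_eq] at h
  exact congrFun h i

theorem snd_eq_of_toPoint_snd_eq {g g' : Fin d → Fin q × Fin q}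
    (h : (toPoint g).2 = (toPoint g').2) (i : Fin d) : (g i).2 = (g' i).2 := by
  simp only [toPoint, Nat.cast_inj, Fin.val_inj, EmbeddingLike.apply_eq_iff_eq] at h
  exact congrFun h i

theorem cornerFreeZ2_image_toPoint {S : Finset (Fin d → Fin q × Fin q)} {r : ℕ}
    (hS : ∀ g ∈ S, (∀ i, g i ∈ windowPairs q) ∧ sqDist g = r) :
    CornerFreeZ2 (S.image toPoint : Set (ℤ × ℤ)) := by
  intro a b δ hδ h
  simp only [coe_image, Set.mem_image, mem_coe] at h
  obtain ⟨⟨g₁, hg₁, e₁⟩, ⟨g₂, hg₂, e₂⟩, ⟨g₃, hg₃, e₃⟩⟩ := h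
  have hy i : (g₂ i).2 = (g₁ i).2 := snd_eq_of_toPoint_snd_eq (by rw [e₁, e₂]) i
  have hx i : (g₃ i).1 = (g₁ i).1 := fst_eq_of_toPoint_fst_eq (by rw [e₁, e₃]) i
  have hsum := digitSum_eq_of_toPoint_add_eq (hS g₂ hg₂).1 (hS g₃ hg₃).1 (by rw [e₂, e₃]; ring)
  have hsq {g} (hg : g ∈ S) : (sqDist g : ℤ) = sqDist g₁ := by rw [(hS g hg).2, (hS g₁ hg₁).2]
  have he : (fun i => ((g₂ i).1 : ℤ) - (g₁ i).1) = 0 := by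
    refine eq_zero_of_sum_sq_add_eq_of_sum_sq_sub_eq (u := fun i => ((g₁ i).1 : ℤ) - (g₁ i).2)
      ?_ ?_
    · rw [← natCast_sqDist, ← hsq hg₂, natCast_sqDist]
      exact sum_congr rfl fun i _ => by rw [hy i]; ring
    · rw [← natCast_sqDist, ← hsq hg₃, natCast_sqDist]
      refine sum_congr rfl fun i _ => ?_
      have := hsum i
      rw [hy i, hx i] at this
      rw [hx i]
      congr 1
      omega
  apply hδ
  have hfst : (fun i => (g₂ i).1) = fun i => (g₁ i).1 := by
    funext i; have := congrFun he i; simp only [Pi.zero_apply] at this; omega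
  have : (toPoint g₂).1 = (toPoint g₁).1 := by simp only [toPoint, hfst]
  rw [e₁, e₂] at this
  simpa using this

/-- Passing from `q` to `q + 2` moves the centre `q / 2` up by one and adds `q + 1` to the sum. -/
theorem four_mul_sum_dist_half_le : ∀ q : ℕ, 4 * ∑ u ∈ range q, Nat.dist u (q / 2) ≤ q ^ 2
  | 0 => by simp
  | 1 => by simp
  | q + 2 => by
    have ih := four_mul_sum_dist_half_le q
    rw [sum_range_succ, sum_range_succ', show (q + 2) / 2 = q / 2 + 1 by omega]
    simp only [Nat.dist_succ_succ]
    have h1 : Nat.dist 0 (q / 2 + 1) = q / 2 + 1 := by simp [Nat.dist]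
    have h2 : Nat.dist q (q / 2) = q - q / 2 := by simp [Nat.dist]; omega
    rw [h1, h2, add_assoc, show q / 2 + 1 + (q - q / 2) = q + 1 by omega]
    nlinarith

theorem card_windowPairs_add_sum_dist (q : ℕ) :
    #(windowPairs q) + ∑ u ∈ range q, Nat.dist u (q / 2) = q ^ 2 := by
  have hfiber (u : Fin q) :
      #{v : Fin q | (u + v : ℕ) ∈ Ico (q / 2) (q / 2 + q)} + Nat.dist u (q / 2) = q := by
    have h1 : #{v : Fin q | (u + v : ℕ) ∈ Ico (q / 2) (q / 2 + q)}
        = #{v ∈ range q | (u + v : ℕ) ∈ Ico (q / 2) (q / 2 + q)} := by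
      rw [card_filter, card_filter,
        Fin.sum_univ_eq_sum_range (fun v => if (u + v : ℕ) ∈ Ico (q / 2) (q / 2 + q) then 1 else 0)]
    have h2 : {v ∈ range q | (u + v : ℕ) ∈ Ico (q / 2) (q / 2 + q)}
        = Ico (q / 2 - u) (min q (q / 2 + q - u)) := by
      ext v; simp only [mem_filter, mem_range, mem_Ico]; omega
    rw [h1, h2, Nat.card_Ico, Nat.dist]
    omega
  rw [windowPairs, card_filter, Fintype.sum_prod_type]
  simp_rw [← card_filter]
  rw [← Fin.sum_univ_eq_sum_range (fun u => Nat.dist u (q / 2)), ← sum_add_distrib,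
    sum_congr rfl fun u _ => hfiber u]
  simp [sq]

theorem three_mul_sq_le_four_mul_card_windowPairs (q : ℕ) : 3 * q ^ 2 ≤ 4 * #(windowPairs q) := by
  have := card_windowPairs_add_sum_dist q
  have := four_mul_sum_dist_half_le q
  omega

theorem sqDist_lt (hd : 0 < d) (g : Fin d → Fin q × Fin q) : sqDist g < d * q ^ 2 :=
  calc sqDist g < ∑ _i : Fin d, q ^ 2 :=
        sum_lt_sum_of_nonempty (univ_nonempty_iff.mpr ⟨⟨0, hd⟩⟩)
          fun i _ => Nat.pow_lt_pow_left (by omega) two_ne_zero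
    _ = d * q ^ 2 := by simp

theorem exists_cornerFreeZ2_card_ge (hq : 0 < q) (hd : 0 < d) :
    ∃ A : Finset (ℤ × ℤ), A ⊆ Ico 0 ((q ^ d : ℕ) : ℤ) ×ˢ Ico 0 ((q ^ d : ℕ) : ℤ) ∧
      CornerFreeZ2 (A : Set (ℤ × ℤ)) ∧ (3 / 4 : ℝ) ^ d * q ^ (2 * d) ≤ d * q ^ 2 * #A := by
  set s := Fintype.piFinset fun _ : Fin d => windowPairs q
  have hmaps : ∀ g ∈ s, sqDist g ∈ range (d * q ^ 2) := fun g _ => mem_range.mpr (sqDist_lt hd g)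
  have hdq : (0 : ℝ) < d * q ^ 2 := by positivity
  have hnsmul : #(range (d * q ^ 2)) • ((#s : ℝ) / (d * q ^ 2)) ≤ #s := by
    rw [card_range, nsmul_eq_mul]; push_cast; rw [mul_div_cancel₀ _ hdq.ne']
  obtain ⟨r, -, hr⟩ := exists_le_card_fiber_of_nsmul_le_card_of_maps_to hmaps
    (nonempty_range_iff.mpr (by positivity)) hnsmul
  refine ⟨{g ∈ s | sqDist g = r}.image toPoint, image_subset_iff.mpr fun g _ => toPoint_mem_box g,
    cornerFreeZ2_image_toPoint (r := r) fun g hg => ?_, ?_⟩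
  · obtain ⟨hg, hr⟩ := mem_filter.mp hg
    exact ⟨Fintype.mem_piFinset.mp hg, hr⟩
  · have hW : (3 / 4 : ℝ) * q ^ 2 ≤ #(windowPairs q) := by
      have : (3 * q ^ 2 : ℝ) ≤ 4 * #(windowPairs q) := by
        exact_mod_cast three_mul_sq_le_four_mul_card_windowPairs q
      linarith
    rw [card_image_of_injective _ toPoint_injective]
    calc (3 / 4 : ℝ) ^ d * q ^ (2 * d) = (3 / 4 * q ^ 2) ^ d := by rw [mul_pow, pow_mul]
      _ ≤ #(windowPairs q) ^ d := by gcongr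
      _ = #s := by simp [s]
      _ ≤ _ := (div_le_iff₀' hdq).mp hr

end CornerConstruction

theorem logb_two_natFloor_bounds {x : ℝ} (hx : 2 ≤ x) :
    logb 2 x - 1 ≤ logb 2 ⌊x⌋₊ ∧ logb 2 ⌊x⌋₊ ≤ logb 2 x := by
  have hfloor : x / 2 ≤ ⌊x⌋₊ := by linarith [Nat.lt_floor_add_one x]
  have hpos : (0 : ℝ) < ⌊x⌋₊ := by linarith
  constructor
  · calc logb 2 x - 1 = logb 2 (x / 2) := by
          rw [logb_div (by linarith) two_ne_zero, logb_self_eq_one one_lt_two]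
      _ ≤ logb 2 ⌊x⌋₊ := logb_le_logb_of_le one_lt_two (by linarith) hfloor
  · exact logb_le_logb_of_le one_lt_two hpos (Nat.floor_le (by linarith))

/-- The exponent comparison behind the final estimate, for `ℓ = log₂ q ≈ Dβ / 2` and
`m = log₂ D`: the loss `3` in `2 √(2β) √(Dℓ) ≥ 2Dβ - 3` is paid for by `ε √(Dℓ)`. -/
theorem corner_exponent_le {β ε m D ℓ : ℝ} (hβ : 0 < β) (hε : 0 ≤ ε) (hDβ : 4 ≤ D * β)
    (hℓ : D * β / 2 - 1 ≤ ℓ) (hℓ' : ℓ ≤ D * β / 2) (hm : m + 3 ≤ ε * (√β / 2) * D) :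
    -(2 * √(2 * β) + ε) * √(D * ℓ) + (m + 2 * ℓ) ≤ -(D * β) := by
  have hD : 0 < D := pos_of_mul_pos_left (by linarith) hβ.le
  have hmain : 2 * (D * β) - 3 ≤ 2 * √(2 * β) * √(D * ℓ) := by
    rw [mul_assoc, ← sqrt_mul (by positivity)]
    have : D * β - 3 / 2 ≤ √(2 * β * (D * ℓ)) :=
      (le_sqrt' (by linarith)).mpr (by nlinarith)
    linarith
  have hslack : m + 3 ≤ ε * √(D * ℓ) := by
    refine hm.trans ?_
    rw [mul_assoc]
    refine mul_le_mul_of_nonneg_left ?_ hε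
    calc √β / 2 * D = √(D ^ 2 * β / 4) := by
          rw [sqrt_div' _ (by norm_num : (0:ℝ) ≤ 4), sqrt_mul' _ hβ.le, sqrt_sq hD.le,
            show (4 : ℝ) = 2 ^ 2 by norm_num, sqrt_sq (by norm_num)]; ring
      _ ≤ √(D * ℓ) := sqrt_le_sqrt (by nlinarith)
  nlinarith

theorem eventually_logb_add_le_mul {K : ℝ} (hK : 0 < K) (a : ℝ) :
    ∀ᶠ d : ℕ in atTop, logb 2 d + a ≤ K * d := by
  have hlo : (fun x => logb 2 x + a) =o[atTop] id := by
    simp only [logb, div_eq_inv_mul]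
    exact (isLittleO_log_id_atTop.const_mul_left _).add (Asymptotics.isLittleO_const_id_atTop a)
  filter_upwards [tendsto_natCast_atTop_atTop.eventually (hlo.bound hK)] with d hd
  simpa [abs_of_nonneg (Nat.cast_nonneg (α := ℝ) d)] using (le_abs_self _).trans hd

theorem one_lt_two_div_sqrt_three : 1 < 2 / √3 := by
  rw [lt_div_iff₀ (by positivity), one_mul, sqrt_lt' two_pos]
  norm_num

theorem eventually_two_rpow_mul_le {ε : ℝ} (hε : 0 < ε) :
    ∀ᶠ d : ℕ in atTop,
      (2 : ℝ) ^ (-(2 * √(2 * logb 2 (4 / 3)) + ε) *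
          √(logb 2 ((⌊(2 / √3) ^ d⌋₊ ^ d : ℕ) : ℝ))) * (d * ⌊(2 / √3) ^ d⌋₊ ^ 2) ≤ (3 / 4) ^ d := by
  set β := logb 2 (4 / 3) with hβdef
  have hβ : 0 < β := logb_pos one_lt_two (by norm_num)
  have hsq : (2 / √3) ^ 2 = 4 / 3 := by rw [div_pow, sq_sqrt (by norm_num)]; norm_num
  have hlogt : logb 2 (2 / √3) = β / 2 := by rw [hβdef, ← hsq, logb_pow]; push_cast; ring
  filter_upwards
    [(tendsto_pow_atTop_atTop_of_one_lt one_lt_two_div_sqrt_three).eventually_ge_atTop 2,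
    (tendsto_natCast_atTop_atTop.atTop_mul_const hβ).eventually_ge_atTop 4,
    eventually_logb_add_le_mul (K := ε * (√β / 2)) (by positivity) 3] with d hpow hdβ hlog
  obtain ⟨hlo, hhi⟩ := logb_two_natFloor_bounds hpow
  rw [logb_pow, hlogt] at hlo hhi
  have hq : (0 : ℝ) < ⌊(2 / √3) ^ d⌋₊ := by
    exact_mod_cast Nat.floor_pos.mpr (by linarith)
  have hd : (0 : ℝ) < d := pos_of_mul_pos_left (by linarith) hβ.le
  have h34 : logb 2 (3 / 4) = -β := by rw [hβdef, ← logb_inv]; norm_num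
  rw [← logb_le_logb one_lt_two (by positivity) (by positivity), logb_mul (by positivity)
    (by positivity), logb_rpow two_pos (by norm_num), logb_mul hd.ne' (by positivity), logb_pow,
    logb_pow, h34, Nat.cast_pow, logb_pow]
  exact (corner_exponent_le hβ hε.le hdβ (by linarith) (by linarith) hlog).trans_eq (by ring)

/-- For every ε > 0 there exists d₀ such that for every integer d ≥ d₀, setting
q = ⌊(2/√3)^d⌋ and N = q^d, there is a corner-free set A ⊆ {0,…,N−1}² with
#A ≥ 2^{-(c+ε)·√(log₂ N)} · N², where c = 2·√(2·log₂(4/3)). -/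
theorem corner_free_lower_bound_explicit (ε : ℝ) (hε : 0 < ε) :
    ∃ d₀ : ℕ, ∀ d : ℕ, d₀ ≤ d →
      ∀ q N : ℕ, q = ⌊(2 / Real.sqrt 3) ^ d⌋₊ → N = q ^ d →
        ∃ A : Finset (ℤ × ℤ),
          A ⊆ Finset.Ico 0 (N : ℤ) ×ˢ Finset.Ico 0 (N : ℤ) ∧
          CornerFreeZ2 (A : Set (ℤ × ℤ)) ∧
          (2 : ℝ) ^ (-(2 * Real.sqrt (2 * Real.logb 2 (4 / 3)) + ε) *
              Real.sqrt (Real.logb 2 N)) * (N : ℝ) ^ 2 ≤ (A.card : ℝ) := by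
  obtain ⟨d₀, hd₀⟩ :=
    eventually_atTop.mp ((eventually_two_rpow_mul_le hε).and (eventually_gt_atTop 0))
  refine ⟨d₀, fun d hd q N hq hN => ?_⟩
  obtain ⟨hbound, hd⟩ := hd₀ d hd
  rw [← hq] at hbound
  have hq0 : 0 < q := hq ▸ Nat.floor_pos.mpr (one_le_pow₀ one_lt_two_div_sqrt_three.le)
  obtain ⟨A, hA, hfree, hcard⟩ := CornerConstruction.exists_cornerFreeZ2_card_ge hq0 hd
  refine ⟨A, hN ▸ hA, hfree, ?_⟩
  have hdq : (0 : ℝ) < d * q ^ 2 := by positivity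
  rw [← mul_le_mul_iff_of_pos_left hdq, hN]
  calc _ = (2 : ℝ) ^ (-(2 * √(2 * logb 2 (4 / 3)) + ε) * √(logb 2 ((q ^ d : ℕ) : ℝ))) *
          (d * q ^ 2) * q ^ (2 * d) := by push_cast; ring
    _ ≤ (3 / 4) ^ d * q ^ (2 * d) := by gcongr
    _ ≤ _ := hcard
end

section
/- Let q ≥ 2 and d ≥ 1 be integers and let r ≥ 0 be an integer. Then the set A_r = {(x, y) ∈ {0,…,q^d−1}² : ‖π(x) − π(y)‖₂² = r and q/2 ≤ x_i + y_i < 3q/2 for all 0 ≤ i < d} contains no corner; that is, if (x, y), (x + s, y), (x, y + s) all lie in A_r for some integer s, then s = 0. -/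
/-
If `(x, y)`, `(x + s, y)` and `(x, y + s)` lie in `A_r`, the digit vectors `π(x + s) + π(y)`
and `π(x) + π(y + s)` have the same base-`q` value `x + y + s`, and all their entries lie in
the half-open interval `[q/2, 3q/2)` of length `q`; by uniqueness of such representations they
are equal. Hence `π(x + s) - π(x) = π(y + s) - π(y) =: t`, and the parallelogram law gives
`‖π(x + s) - π(y)‖² + ‖π(x) - π(y + s)‖² = 2‖π(x) - π(y)‖² + 2‖t‖²`, i.e. `2r = 2r + 2‖t‖²`.
So `t = 0`, `π(x + s) = π(x)` and `s = 0`.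
-/

/-- The `i`-th digit of the base-`q` expansion of a (nonnegative) integer `n`. -/
def zdigit (q : ℕ) (n : ℤ) (i : ℕ) : ℤ := n / (q : ℤ) ^ i % (q : ℤ)

/-- The set `A_r` of pairs `(x, y) ∈ {0,…,q^d−1}²` with `‖π(x) − π(y)‖₂² = r` and
`q/2 ≤ x_i + y_i < 3q/2` for all `0 ≤ i < d`, where `π(x)` is the vector of base-`q`
digits of `x`. -/
def cornerFreeSet (q d r : ℕ) : Set (ℤ × ℤ) :=
  {p : ℤ × ℤ |
    0 ≤ p.1 ∧ p.1 < (q : ℤ) ^ d ∧ 0 ≤ p.2 ∧ p.2 < (q : ℤ) ^ d ∧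
    (∑ i ∈ Finset.range d, (zdigit q p.1 i - zdigit q p.2 i) ^ 2) = (r : ℤ) ∧
    ∀ i < d, (q : ℚ) / 2 ≤ ((zdigit q p.1 i + zdigit q p.2 i : ℤ) : ℚ) ∧
      ((zdigit q p.1 i + zdigit q p.2 i : ℤ) : ℚ) < 3 * q / 2}

theorem Int.emod_mul_eq_emod_add_mul_ediv_emod {a b : ℤ} (ha : 0 < a) (hb : 0 < b) (n : ℤ) :
    n % (a * b) = n % a + a * (n / a % b) := by
  have hn : n % a + a * (n / a % b) + a * b * (n / a / b) = n := by
    linear_combination Int.emod_add_mul_ediv n a + a * Int.emod_add_mul_ediv (n / a) b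
  have h₁ := Int.emod_nonneg n ha.ne'
  have h₂ := Int.emod_lt_of_pos n ha
  have h₃ := Int.emod_nonneg (n / a) hb.ne'
  have h₄ := Int.emod_lt_of_pos (n / a) hb
  conv_lhs => rw [← hn, Int.add_mul_emod_self_left]
  exact Int.emod_eq_of_lt (by positivity) (by nlinarith)

theorem sum_zdigit_mul_pow {q : ℕ} (hq : 0 < q) (d : ℕ) (n : ℤ) :
    ∑ i ∈ Finset.range d, zdigit q n i * (q : ℤ) ^ i = n % (q : ℤ) ^ d := by
  induction d with
  | zero => simp
  | succ d ih =>
    rw [Finset.sum_range_succ, ih, pow_succ,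
      Int.emod_mul_eq_emod_add_mul_ediv_emod (by positivity) (by exact_mod_cast hq), zdigit]
    ring

theorem eq_of_zdigit_eq {q d : ℕ} (hq : 0 < q) {m n : ℤ} (hm₀ : 0 ≤ m) (hm : m < (q : ℤ) ^ d)
    (hn₀ : 0 ≤ n) (hn : n < (q : ℤ) ^ d) (h : ∀ i < d, zdigit q m i = zdigit q n i) : m = n := by
  rw [← Int.emod_eq_of_lt hm₀ hm, ← Int.emod_eq_of_lt hn₀ hn, ← sum_zdigit_mul_pow hq,
    ← sum_zdigit_mul_pow hq]
  exact Finset.sum_congr rfl fun i hi => by rw [h i (Finset.mem_range.mp hi)]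

theorem eq_zero_of_pow_dvd_sum_mul_pow {q : ℤ} {d : ℕ} {e : ℕ → ℤ} (he : ∀ i < d, |e i| < q)
    (hdvd : q ^ d ∣ ∑ i ∈ Finset.range d, e i * q ^ i) : ∀ i < d, e i = 0 := by
  induction d generalizing e with
  | zero => intro i hi; omega
  | succ d ih =>
    set S := ∑ i ∈ Finset.range d, e (i + 1) * q ^ i
    have hsplit : ∑ i ∈ Finset.range (d + 1), e i * q ^ i = e 0 + q * S := by
      rw [Finset.sum_range_succ', Finset.mul_sum, pow_zero, mul_one, add_comm]
      exact congrArg (e 0 + ·) (Finset.sum_congr rfl fun i _ => by ring)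
    have hq : q ≠ 0 := ((abs_nonneg _).trans_lt (he 0 d.succ_pos)).ne'
    rw [hsplit, pow_succ'] at hdvd
    have he₀ : e 0 = 0 := by
      refine Int.eq_zero_of_abs_lt_dvd ?_ (he 0 d.succ_pos)
      exact (dvd_add_left (dvd_mul_right q S)).mp ((dvd_mul_right q _).trans hdvd)
    rw [he₀, zero_add] at hdvd
    have htail := ih (e := fun i => e (i + 1)) (fun i hi => he (i + 1) (by omega))
      (Int.dvd_of_mul_dvd_mul_left hq hdvd)
    rintro (_ | i) hi
    · exact he₀
    · exact htail i (by omega)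

theorem abs_sub_lt_of_mid_range {q : ℕ} {c c' : ℤ}
    (hc : (q : ℚ) / 2 ≤ c ∧ (c : ℚ) < 3 * q / 2) (hc' : (q : ℚ) / 2 ≤ c' ∧ (c' : ℚ) < 3 * q / 2) :
    |c - c'| < q := by
  rw [abs_sub_lt_iff]
  constructor <;> qify <;> linarith [hc.1, hc.2, hc'.1, hc'.2]

theorem zdigit_add_zdigit_eq_of_mid_range {q d : ℕ} (hq : 0 < q) {x x' y y' : ℤ}
    (h : x' + y = x + y')
    (hmid : ∀ i < d, (q : ℚ) / 2 ≤ ((zdigit q x' i + zdigit q y i : ℤ) : ℚ) ∧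
      ((zdigit q x' i + zdigit q y i : ℤ) : ℚ) < 3 * q / 2)
    (hmid' : ∀ i < d, (q : ℚ) / 2 ≤ ((zdigit q x i + zdigit q y' i : ℤ) : ℚ) ∧
      ((zdigit q x i + zdigit q y' i : ℤ) : ℚ) < 3 * q / 2) :
    ∀ i < d, zdigit q x' i + zdigit q y i = zdigit q x i + zdigit q y' i := by
  have hdvd : (q : ℤ) ^ d ∣ ∑ i ∈ Finset.range d,
      (zdigit q x' i + zdigit q y i - (zdigit q x i + zdigit q y' i)) * (q : ℤ) ^ i := by
    simp only [sub_mul, add_mul, Finset.sum_sub_distrib, Finset.sum_add_distrib,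
      sum_zdigit_mul_pow hq]
    set m := (q : ℤ) ^ d
    exact ⟨x / m + y' / m - x' / m - y / m, by
      linear_combination h + Int.emod_add_mul_ediv x' m + Int.emod_add_mul_ediv y m
        - Int.emod_add_mul_ediv x m - Int.emod_add_mul_ediv y' m⟩
  intro i hi
  exact sub_eq_zero.mp <| eq_zero_of_pow_dvd_sum_mul_pow
    (fun i hi => abs_sub_lt_of_mid_range (hmid i hi) (hmid' i hi)) hdvd i hi

theorem Finset.sum_add_sq_add_sum_sub_sq {ι R : Type*} [CommRing R] (s : Finset ι) (u t : ι → R) :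
    ∑ i ∈ s, (u i + t i) ^ 2 + ∑ i ∈ s, (u i - t i) ^ 2
      = 2 * ∑ i ∈ s, u i ^ 2 + 2 * ∑ i ∈ s, t i ^ 2 := by
  rw [← Finset.sum_add_distrib, Finset.mul_sum, Finset.mul_sum, ← Finset.sum_add_distrib]
  exact Finset.sum_congr rfl fun i _ => by ring

theorem Finset.eq_of_add_eq_add_of_sum_sq_sub_eq {ι R : Type*} [CommRing R] [LinearOrder R]
    [IsStrictOrderedRing R] {s : Finset ι} {a a' b b' : ι → R}
    (hadd : ∀ i ∈ s, a' i + b i = a i + b' i)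
    (h₁ : ∑ i ∈ s, (a' i - b i) ^ 2 = ∑ i ∈ s, (a i - b i) ^ 2)
    (h₂ : ∑ i ∈ s, (a i - b' i) ^ 2 = ∑ i ∈ s, (a i - b i) ^ 2) :
    ∀ i ∈ s, a' i = a i := by
  have hpar := Finset.sum_add_sq_add_sum_sub_sq s (fun i => a i - b i) (fun i => a' i - a i)
  have hplus : ∑ i ∈ s, (a i - b i + (a' i - a i)) ^ 2 = ∑ i ∈ s, (a' i - b i) ^ 2 :=
    Finset.sum_congr rfl fun i _ => by ring
  have hminus : ∑ i ∈ s, (a i - b i - (a' i - a i)) ^ 2 = ∑ i ∈ s, (a i - b' i) ^ 2 :=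
    Finset.sum_congr rfl fun i hi => by
      rw [show a i - b' i = a i - b i - (a' i - a i) by linear_combination hadd i hi]
  have hsq : ∑ i ∈ s, (a' i - a i) ^ 2 = 0 := by
    simp only [hplus, hminus, h₁, h₂] at hpar
    linarith
  intro i hi
  exact sub_eq_zero.mp <| pow_eq_zero_iff two_ne_zero |>.mp <|
    (Finset.sum_eq_zero_iff_of_nonneg fun i _ => sq_nonneg _).mp hsq i hi

theorem cornerFreeSet_is_corner_free_general (q d r : ℕ) (hq : 2 ≤ q)
    (x y s : ℤ)
    (h₁ : (x, y) ∈ cornerFreeSet q d r)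
    (h₂ : (x + s, y) ∈ cornerFreeSet q d r)
    (h₃ : (x, y + s) ∈ cornerFreeSet q d r) :
    s = 0 := by
  have hq₀ : 0 < q := by omega
  obtain ⟨hx₀, hx, -, -, hr₁, -⟩ := h₁
  obtain ⟨hxs₀, hxs, -, -, hr₂, hmid₂⟩ := h₂
  obtain ⟨-, -, -, -, hr₃, hmid₃⟩ := h₃
  have hshift :=
    zdigit_add_zdigit_eq_of_mid_range hq₀ (by ring : x + s + y = x + (y + s)) hmid₂ hmid₃
  have hdigits := Finset.eq_of_add_eq_add_of_sum_sq_sub_eq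
    (fun i hi => hshift i (Finset.mem_range.mp hi)) (hr₂.trans hr₁.symm) (hr₃.trans hr₁.symm)
  have hxs_eq : x + s = x :=
    eq_of_zdigit_eq hq₀ hxs₀ hxs hx₀ hx fun i hi => hdigits i (Finset.mem_range.mpr hi)
  linarith

/-- The set `A_r` contains no corner: if `(x, y), (x + s, y), (x, y + s)` all lie in `A_r`
for some integer `s`, then `s = 0`. -/
theorem cornerFreeSet_is_corner_free (q d r : ℕ) (hq : 2 ≤ q) (hd : 1 ≤ d)
    (x y s : ℤ)
    (h₁ : (x, y) ∈ cornerFreeSet q d r)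
    (h₂ : (x + s, y) ∈ cornerFreeSet q d r)
    (h₃ : (x, y + s) ∈ cornerFreeSet q d r) :
    s = 0 :=
  cornerFreeSet_is_corner_free_general q d r hq x y s h₁ h₂ h₃
end

section
/- Let q ≥ 2 be an even integer and d ≥ 1 an integer. Then there exists an integer r with 0 ≤ r ≤ d(q−1)² such that the set A_r = {(x, y) ∈ {0,…,q^d−1}² : ‖π(x) − π(y)‖₂² = r and q/2 ≤ x_i + y_i < 3q/2 for all 0 ≤ i < d} satisfies #A_r ≥ (3q²/4)^d / (d(q−1)² + 1). In particular there exists r for which #A_r ≥ (dq²)^{-1} · (3q²/4)^d. -/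
/-- The `i`-th digit of the base-`q` expansion of a natural number `x`. -/
def digit (q x i : ℕ) : ℕ := x / q ^ i % q

/-!
The digit condition `q/2 ≤ x_i + y_i < 3q/2` is imposed coordinatewise, and splitting off the lowest
digit shows that the admissible pairs `(x, y)` correspond to `d`-tuples of admissible digit pairs.
For even `q = 2m` exactly `3m² = 3q²/4` digit pairs are admissible, so there are `(3q²/4)^d`
admissible pairs. Their squared digit distance `‖π(x) − π(y)‖₂²` takes one of the `d(q−1)² + 1`
values `0, …, d(q−1)²`, so by pigeonhole one value is taken by a `1/(d(q−1)² + 1)` fraction of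
them; finally `d(q−1)² + 1 ≤ dq²`.
-/

open Finset

lemma digit_zero (q x : ℕ) : digit q x 0 = x % q := by simp [digit]

lemma digit_succ (q x i : ℕ) : digit q x (i + 1) = digit q (x / q) i := by
  simp only [digit, Nat.div_div_eq_div_mul, pow_succ']

lemma digit_lt (q x i : ℕ) (hq : 0 < q) : digit q x i < q := Nat.mod_lt _ hq

lemma forall_lt_succ_digit_iff (P : ℕ → ℕ → Prop) (q d x y : ℕ) :
    (∀ i < d + 1, P (digit q x i) (digit q y i)) ↔
      P (x % q) (y % q) ∧ ∀ i < d, P (digit q (x / q) i) (digit q (y / q) i) := by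
  simp only [Nat.forall_lt_succ_left, digit_zero, digit_succ]

lemma add_mul_lt_pow_succ {q a x d : ℕ} (ha : a < q) (hx : x < q ^ d) :
    a + q * x < q ^ (d + 1) :=
  calc a + q * x < q * (x + 1) := by linarith
    _ ≤ q ^ (d + 1) := by rw [pow_succ']; exact Nat.mul_le_mul_left q hx

lemma card_filter_forall_digit (P : ℕ → ℕ → Prop) [DecidableRel P] {q : ℕ} (hq : 0 < q)
    (d : ℕ) :
    #{p ∈ range (q ^ d) ×ˢ range (q ^ d) | ∀ i < d, P (digit q p.1 i) (digit q p.2 i)} =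
      #{p ∈ range q ×ˢ range q | P p.1 p.2} ^ d := by
  induction d with
  | zero => simp
  | succ d ih =>
    rw [pow_succ' (#_ : ℕ), ← ih, ← card_product]
    have split_mod (a x : ℕ) (ha : a < q) : (a + q * x) % q = a ∧ (a + q * x) / q = x := by
      simp [Nat.add_mul_mod_self_left, Nat.mod_eq_of_lt ha, Nat.add_mul_div_left _ _ hq,
        Nat.div_eq_of_lt ha]
    apply card_nbij' (fun p => ((p.1 % q, p.2 % q), (p.1 / q, p.2 / q)))
      (fun p => (p.1.1 + q * p.2.1, p.1.2 + q * p.2.2))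
    · rintro ⟨x, y⟩ h
      simp only [mem_coe, mem_filter, mem_product, mem_range, forall_lt_succ_digit_iff,
        Nat.div_lt_iff_lt_mul hq, ← pow_succ] at h ⊢
      exact ⟨⟨⟨Nat.mod_lt _ hq, Nat.mod_lt _ hq⟩, h.2.1⟩, h.1, h.2.2⟩
    · rintro ⟨⟨a, b⟩, x, y⟩ h
      simp only [mem_coe, mem_filter, mem_product, mem_range, forall_lt_succ_digit_iff] at h ⊢
      obtain ⟨⟨⟨ha, hb⟩, hab⟩, ⟨hx, hy⟩, h⟩ := h
      rw [(split_mod a x ha).1, (split_mod a x ha).2, (split_mod b y hb).1, (split_mod b y hb).2]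
      exact ⟨⟨add_mul_lt_pow_succ ha hx, add_mul_lt_pow_succ hb hy⟩, hab, h⟩
    · rintro ⟨x, y⟩ -
      simp [Nat.mod_add_div]
    · rintro ⟨⟨a, b⟩, x, y⟩ h
      simp only [mem_coe, mem_filter, mem_product, mem_range] at h
      simp [split_mod a x h.1.1.1, split_mod b y h.1.1.2]

lemma card_filter_sum_mem_Ico (m : ℕ) :
    #{p ∈ range (2 * m) ×ˢ range (2 * m) | m ≤ p.1 + p.2 ∧ p.1 + p.2 < 3 * m} = 3 * m ^ 2 := by
  have fiber (a : ℕ) : #{b ∈ range (2 * m) | m ≤ a + b ∧ a + b < 3 * m} =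
      min (3 * m - a) (2 * m) - (m - a) := by
    rw [← Nat.card_Ico]
    congr 1
    ext b
    simp only [mem_filter, mem_range, mem_Ico]
    omega
  rw [card_filter, sum_product]
  simp only [← card_filter, fiber]
  -- Rows `a` and `m + a` together contain exactly `3m` admissible entries.
  rw [two_mul m, sum_range_add, ← sum_add_distrib,
    sum_congr rfl fun a ha => (by rw [mem_range] at ha; omega : _ = 3 * m),
    sum_const, card_range, smul_eq_mul]
  ring

lemma card_filter_half_le_add_lt {q : ℕ} (hq : Even q) :
    (#{p ∈ range q ×ˢ range q |
      (q : ℚ) / 2 ≤ (p.1 : ℚ) + (p.2 : ℚ) ∧ (p.1 : ℚ) + (p.2 : ℚ) < 3 * q / 2} : ℝ) =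
      3 * q ^ 2 / 4 := by
  obtain ⟨m, rfl⟩ := hq.two_dvd
  have hcond (a b : ℕ) : ((2 * m : ℕ) : ℚ) / 2 ≤ (a : ℚ) + b ∧ (a : ℚ) + b < 3 * (2 * m : ℕ) / 2 ↔
      m ≤ a + b ∧ a + b < 3 * m := by
    rw [show ((2 * m : ℕ) : ℚ) / 2 = m by push_cast; ring,
      show 3 * ((2 * m : ℕ) : ℚ) / 2 = (3 * m : ℕ) by push_cast; ring]
    norm_cast
  rw [filter_congr fun p _ => hcond p.1 p.2, card_filter_sum_mem_Ico]
  push_cast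
  ring

lemma sum_sq_sub_digit_le {q : ℕ} (hq : 0 < q) (d x y : ℕ) :
    ∑ i ∈ range d, ((digit q x i : ℤ) - digit q y i) ^ 2 ≤ ((d * (q - 1) ^ 2 : ℕ) : ℤ) := by
  have hterm (i : ℕ) : ((digit q x i : ℤ) - digit q y i) ^ 2 ≤ ((q - 1 : ℕ) : ℤ) ^ 2 := by
    have := digit_lt q x i hq
    have := digit_lt q y i hq
    apply sq_le_sq' <;> omega
  simpa using sum_le_card_nsmul (range d) _ _ fun i _ => hterm i

lemma exists_le_card_filter_int_eq {α : Type*} (s : Finset α) (D : α → ℤ) {n : ℕ}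
    (hD : ∀ a ∈ s, 0 ≤ D a ∧ D a ≤ n) : ∃ r ≤ n, (#s : ℝ) / (n + 1) ≤ #{a ∈ s | D a = r} := by
  obtain ⟨r, hr, h⟩ := exists_le_card_fiber_of_nsmul_le_card_of_maps_to
    (f := fun a => (D a).toNat) (t := range (n + 1)) (b := (#s : ℝ) / (n + 1))
    (fun a ha => mem_range.mpr (by have := hD a ha; omega))
    nonempty_range_add_one
    (by rw [card_range, nsmul_eq_mul]; push_cast; field_simp; rfl)
  refine ⟨r, Nat.lt_succ_iff.mp (mem_range.mp hr), h.trans_eq ?_⟩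
  congr 2
  exact filter_congr fun a ha => by have := hD a ha; omega

lemma card_filter_forall_half_le_digit_add_lt {q : ℕ} (hq : 0 < q) (hq2 : Even q) (d : ℕ) :
    (#{p ∈ range (q ^ d) ×ˢ range (q ^ d) | ∀ i < d,
      (q : ℚ) / 2 ≤ (digit q p.1 i : ℚ) + (digit q p.2 i : ℚ) ∧
        (digit q p.1 i : ℚ) + (digit q p.2 i : ℚ) < 3 * q / 2} : ℝ) = (3 * q ^ 2 / 4) ^ d := by
  rw [card_filter_forall_digit (fun a b : ℕ =>
    (q : ℚ) / 2 ≤ (a : ℚ) + (b : ℚ) ∧ (a : ℚ) + (b : ℚ) < 3 * q / 2) hq d]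
  push_cast
  rw [card_filter_half_le_add_lt hq2]

/-- For even `q ≥ 2` and `d ≥ 1`, there exists `r` with `0 ≤ r ≤ d(q−1)²` such that the set
`A_r = {(x, y) ∈ {0,…,q^d−1}² : ‖π(x) − π(y)‖₂² = r, q/2 ≤ x_i + y_i < 3q/2 for all i < d}`
satisfies `#A_r ≥ (3q²/4)^d / (d(q−1)² + 1)`, and in particular `#A_r ≥ (dq²)⁻¹·(3q²/4)^d`. -/
theorem exists_large_sphere_slice (q d : ℕ) (hq : 2 ≤ q) (hq2 : Even q) (hd : 1 ≤ d) :
    ∃ r : ℕ, r ≤ d * (q - 1) ^ 2 ∧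
      (3 * (q : ℝ) ^ 2 / 4) ^ d / ((d : ℝ) * ((q : ℝ) - 1) ^ 2 + 1) ≤
        (((Finset.range (q ^ d) ×ˢ Finset.range (q ^ d)).filter
          (fun p => (∑ i ∈ Finset.range d,
              ((digit q p.1 i : ℤ) - (digit q p.2 i : ℤ)) ^ 2) = (r : ℤ) ∧
            ∀ i < d, (q : ℚ) / 2 ≤ (digit q p.1 i : ℚ) + (digit q p.2 i : ℚ) ∧
              (digit q p.1 i : ℚ) + (digit q p.2 i : ℚ) < 3 * q / 2)).card : ℝ) ∧
      ((d : ℝ) * (q : ℝ) ^ 2)⁻¹ * (3 * (q : ℝ) ^ 2 / 4) ^ d ≤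
        (((Finset.range (q ^ d) ×ˢ Finset.range (q ^ d)).filter
          (fun p => (∑ i ∈ Finset.range d,
              ((digit q p.1 i : ℤ) - (digit q p.2 i : ℤ)) ^ 2) = (r : ℤ) ∧
            ∀ i < d, (q : ℚ) / 2 ≤ (digit q p.1 i : ℚ) + (digit q p.2 i : ℚ) ∧
              (digit q p.1 i : ℚ) + (digit q p.2 i : ℚ) < 3 * q / 2)).card : ℝ) := by
  have hq0 : 0 < q := by omega
  obtain ⟨r, hr, hfiber⟩ := exists_le_card_filter_int_eq
    {p ∈ range (q ^ d) ×ˢ range (q ^ d) | ∀ i < d,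
      (q : ℚ) / 2 ≤ (digit q p.1 i : ℚ) + (digit q p.2 i : ℚ) ∧
        (digit q p.1 i : ℚ) + (digit q p.2 i : ℚ) < 3 * q / 2}
    (fun p => ∑ i ∈ range d, ((digit q p.1 i : ℤ) - digit q p.2 i) ^ 2)
    (fun p _ => ⟨sum_nonneg fun _ _ => sq_nonneg _, sum_sq_sub_digit_le hq0 d p.1 p.2⟩)
  have hN : ((d * (q - 1) ^ 2 : ℕ) : ℝ) = d * ((q : ℝ) - 1) ^ 2 := by
    rw [Nat.cast_mul, Nat.cast_pow, Nat.cast_sub (by omega), Nat.cast_one]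
  rw [card_filter_forall_half_le_digit_add_lt hq0 hq2, hN, filter_filter] at hfiber
  have hdq : ((d : ℝ) * q ^ 2)⁻¹ * (3 * q ^ 2 / 4) ^ d ≤
      (3 * q ^ 2 / 4) ^ d / (d * ((q : ℝ) - 1) ^ 2 + 1) := by
    rw [inv_mul_eq_div]
    have hd' : (1 : ℝ) ≤ d := by exact_mod_cast hd
    have hq' : (2 : ℝ) ≤ q := by exact_mod_cast hq
    gcongr
    nlinarith
  refine ⟨r, hr, ?slice, hdq.trans ?slice⟩
  simpa only [and_comm] using hfiber
end
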